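/- A symmetric bilinear form h = (h_{ij}) on 𝔸_n has totally symmetric trilinear map (a,b,c) ↦ h(a·b, c) if and only if h_{ij} = 0 whenever i ≠ n or j ≠ n (i.e., only h_{nn} may be nonzero). -/

import Mathlib

/-!
Write `ν` for the last index. Since `(a·b)^i = a^i b^ν`, the form `h(a·b, c)` equals
`∑ h_{ij} a^i b^ν c^j`; in particular `h_{ij} = h(e_i·e_ν, e_j)`, and `x·y = 0` whenever `y^ν = 0`.
Swapping the first two arguments gives `h_{ij} = h(e_ν·e_i, e_j)`, which vanishes for `i ≠ ν`, and
swapping the last two gives `h_{ij} = h(e_i·e_j, e_ν)`, which vanishes for `j ≠ ν`.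
Conversely, if only `h_{νν}` is nonzero then `h(a·b, c) = h_{νν} a^ν b^ν c^ν`, which is symmetric.
-/

open Finset

/-- Multiplication of the algebra `𝔸_n = ℂⁿ`: `(a·b)^i = a^i b^n`. -/
noncomputable def Amul (n : ℕ) (hn : 0 < n) (a b : Fin n → ℂ) : Fin n → ℂ :=
  fun i => a i * b ⟨n - 1, Nat.sub_lt hn Nat.one_pos⟩

/-- The bilinear form on `𝔸_n` with matrix `H`. -/
noncomputable def AForm (n : ℕ) (H : Matrix (Fin n) (Fin n) ℂ) (a b : Fin n → ℂ) : ℂ :=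
  ∑ i : Fin n, ∑ j : Fin n, H i j * a i * b j

/-- The index of the last basis vector `e_n`, which is `n - 1` in the 0-based `Fin n`. -/
abbrev lastIdx (n : ℕ) (hn : 0 < n) : Fin n := ⟨n - 1, Nat.sub_lt hn Nat.one_pos⟩

section

variable {n : ℕ} (H : Matrix (Fin n) (Fin n) ℂ)

theorem AForm_single_single (i j : Fin n) :
    AForm n H (Pi.single i 1) (Pi.single j 1) = H i j := by
  simp [AForm, Pi.single_apply]

theorem AForm_zero_left (c : Fin n → ℂ) : AForm n H 0 c = 0 := by
  simp [AForm]

variable (hn : 0 < n)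

theorem Amul_eq_zero_of_apply_lastIdx (a : Fin n → ℂ) {b : Fin n → ℂ}
    (hb : b (lastIdx n hn) = 0) : Amul n hn a b = 0 := by
  funext i
  simp [Amul, hb]

theorem Amul_single_lastIdx (a : Fin n → ℂ) : Amul n hn a (Pi.single (lastIdx n hn) 1) = a := by
  funext i
  simp [Amul]

theorem AForm_Amul_single_single_eq_zero (i : Fin n) {j : Fin n} (hj : j ≠ lastIdx n hn)
    (c : Fin n → ℂ) : AForm n H (Amul n hn (Pi.single i 1) (Pi.single j 1)) c = 0 := by
  rw [Amul_eq_zero_of_apply_lastIdx hn _ (Pi.single_eq_of_ne hj.symm 1), AForm_zero_left]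

theorem eq_zero_of_ne_lastIdx_of_symm
    (hswap₁₂ : ∀ a b c, AForm n H (Amul n hn a b) c = AForm n H (Amul n hn b a) c)
    (hswap₂₃ : ∀ a b c, AForm n H (Amul n hn a b) c = AForm n H (Amul n hn a c) b)
    {i j : Fin n} (hij : i ≠ lastIdx n hn ∨ j ≠ lastIdx n hn) : H i j = 0 := by
  have hH : H i j = AForm n H (Amul n hn (Pi.single i 1) (Pi.single (lastIdx n hn) 1))
      (Pi.single j 1) := by
    rw [Amul_single_lastIdx, AForm_single_single]
  rcases hij with hi | hj
  · rw [hH, hswap₁₂, AForm_Amul_single_single_eq_zero H hn _ hi]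
  · rw [hH, ← hswap₂₃, AForm_Amul_single_single_eq_zero H hn _ hj]

variable {H}

theorem AForm_eq_of_eq_zero_of_ne_lastIdx
    (h0 : ∀ i j : Fin n, (i ≠ lastIdx n hn ∨ j ≠ lastIdx n hn) → H i j = 0) (x y : Fin n → ℂ) :
    AForm n H x y = H (lastIdx n hn) (lastIdx n hn) * x (lastIdx n hn) * y (lastIdx n hn) := by
  unfold AForm
  rw [Fintype.sum_eq_single (lastIdx n hn), Fintype.sum_eq_single (lastIdx n hn)]
  · intro j hj
    simp [h0 _ j (Or.inr hj)]
  · intro i hi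
    simp [h0 i _ (Or.inl hi)]

theorem AForm_Amul_eq_of_eq_zero_of_ne_lastIdx
    (h0 : ∀ i j : Fin n, (i ≠ lastIdx n hn ∨ j ≠ lastIdx n hn) → H i j = 0)
    (a b c : Fin n → ℂ) :
    AForm n H (Amul n hn a b) c =
      H (lastIdx n hn) (lastIdx n hn) * a (lastIdx n hn) * b (lastIdx n hn) * c (lastIdx n hn) := by
  rw [AForm_eq_of_eq_zero_of_ne_lastIdx hn h0, Amul]
  ring

end

theorem An_third_order_cocycle_classification_general (n : ℕ) (hn : 0 < n)
    (H : Matrix (Fin n) (Fin n) ℂ) :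
    (∀ a b c : Fin n → ℂ,
        AForm n H (Amul n hn a b) c = AForm n H (Amul n hn b a) c ∧
        AForm n H (Amul n hn a b) c = AForm n H (Amul n hn a c) b ∧
        AForm n H (Amul n hn a b) c = AForm n H (Amul n hn b c) a ∧
        AForm n H (Amul n hn a b) c = AForm n H (Amul n hn c a) b ∧
        AForm n H (Amul n hn a b) c = AForm n H (Amul n hn c b) a) ↔
    (∀ i j : Fin n, (i ≠ ⟨n - 1, Nat.sub_lt hn Nat.one_pos⟩ ∨
        j ≠ ⟨n - 1, Nat.sub_lt hn Nat.one_pos⟩) → H i j = 0) := by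
  constructor
  · intro htotal i j hij
    exact eq_zero_of_ne_lastIdx_of_symm H hn (fun a b c => (htotal a b c).1)
      (fun a b c => (htotal a b c).2.1) hij
  · intro h0 a b c
    simp only [AForm_Amul_eq_of_eq_zero_of_ne_lastIdx hn h0]
    refine ⟨?_, ?_, ?_, ?_, ?_⟩ <;> ring

/-- For a symmetric bilinear form `h` on `𝔸_n`, the trilinear map
`(a,b,c) ↦ h(a·b, c)` is totally symmetric iff `h_{ij} = 0` whenever
`i ≠ n` or `j ≠ n` (so only `h_{nn}` may be nonzero). -/
theorem An_third_order_cocycle_classification (n : ℕ) (hn : 0 < n)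
    (H : Matrix (Fin n) (Fin n) ℂ) (hsymm : ∀ i j, H i j = H j i) :
    (∀ a b c : Fin n → ℂ,
        AForm n H (Amul n hn a b) c = AForm n H (Amul n hn b a) c ∧
        AForm n H (Amul n hn a b) c = AForm n H (Amul n hn a c) b ∧
        AForm n H (Amul n hn a b) c = AForm n H (Amul n hn b c) a ∧
        AForm n H (Amul n hn a b) c = AForm n H (Amul n hn c a) b ∧
        AForm n H (Amul n hn a b) c = AForm n H (Amul n hn c b) a) ↔
    (∀ i j : Fin n, (i ≠ ⟨n - 1, Nat.sub_lt hn Nat.one_pos⟩ ∨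
        j ≠ ⟨n - 1, Nat.sub_lt hn Nat.one_pos⟩) → H i j = 0) :=
  An_third_order_cocycle_classification_general n hn H
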